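/- Fix c₁ > 0 and define φ(v) := 1/4 + v·cot(c₁·v) − v² for v ∈ (0, π/c₁). Then φ is strictly decreasing on (0, π/c₁); φ(v) → 1/4 + 1/c₁ as v → 0⁺; and φ(v) → −∞ as v → (π/c₁)⁻. Consequently, for each real u with u² < 1/4 + 1/c₁ there is exactly one v ∈ (0, π/c₁) with u² = φ(v), and for u² ≥ 1/4 + 1/c₁ there is none. -/

import Mathlib

/-!
Write `v cot(c v) = g(c v) / c` with `g t = t cot t`. Since `g' t = (sin t cos t - t) / sin² t`
and `sin t cos t = sin (2t) / 2 < t`, `g` is strictly decreasing on `(0, π)`; moreover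
`g = cos / sinc` tends to `1` at `0`, and `g → -∞` at `π⁻` because `sin → 0⁺` while `t cos t → -π`.
So `φ` is continuous and strictly decreasing on `(0, π/c)` with the stated one-sided limits, and
the intermediate value theorem makes it a bijection onto `(-∞, 1/4 + 1/c)`.
-/

open Filter Set Topology

section IntermediateValue

variable {α β : Type*} [ConditionallyCompleteLinearOrder α] [TopologicalSpace α] [OrderTopology α]
  [DenselyOrdered α] [LinearOrder β] [TopologicalSpace β] [OrderClosedTopology β]
  {f : α → β} {a b : α} {L : β}

theorem StrictAntiOn.lt_of_tendsto_nhdsGT (hf : StrictAntiOn f (Ioo a b))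
    (ha : Tendsto f (𝓝[>] a) (𝓝 L)) {x : α} (hx : x ∈ Ioo a b) : f x < L := by
  obtain ⟨y, hay, hyx⟩ := exists_between hx.1
  have hy : y ∈ Ioo a b := ⟨hay, hyx.trans hx.2⟩
  have : (𝓝[>] a).NeBot := nhdsGT_neBot_of_exists_gt ⟨y, hay⟩
  have hyL : f y ≤ L := ge_of_tendsto ha <| by
    filter_upwards [Ioo_mem_nhdsGT hay] with w hw
    exact (hf ⟨hw.1, hw.2.trans hy.2⟩ hy hw.2).le
  exact (hf hy hx hyx).trans_le hyL

theorem StrictAntiOn.image_Ioo_eq_Iio_of_tendsto (hf : StrictAntiOn f (Ioo a b))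
    (hc : ContinuousOn f (Ioo a b)) (hab : a < b) (ha : Tendsto f (𝓝[>] a) (𝓝 L))
    (hb : Tendsto f (𝓝[<] b) atBot) : f '' Ioo a b = Iio L := by
  refine Subset.antisymm ?_ ?_
  · rintro _ ⟨x, hx, rfl⟩
    exact hf.lt_of_tendsto_nhdsGT ha hx
  · have : (𝓝[>] a).NeBot := nhdsGT_neBot_of_exists_gt ⟨b, hab⟩
    have : (𝓝[<] b).NeBot := nhdsLT_neBot_of_exists_lt ⟨a, hab⟩
    exact isPreconnected_Ioo.intermediate_value_Iio
      (le_principal_iff.2 (Ioo_mem_nhdsLT hab)) (le_principal_iff.2 (Ioo_mem_nhdsGT hab)) hc hb ha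

end IntermediateValue

namespace Real

theorem hasDerivAt_cot {x : ℝ} (hx : sin x ≠ 0) : HasDerivAt cot (-1 / sin x ^ 2) x := by
  rw [show cot = fun y => cos y / sin y from funext cot_eq_cos_div_sin]
  refine ((hasDerivAt_cos x).div (hasDerivAt_sin x) hx).congr_deriv ?_
  congr 1
  linear_combination -sin_sq_add_cos_sq x

theorem sin_mul_cos_lt {x : ℝ} (hx : 0 < x) : sin x * cos x < x := by
  have := sin_lt (by positivity : 0 < 2 * x)
  rw [sin_two_mul] at this
  linarith

theorem strictAntiOn_mul_cot : StrictAntiOn (fun x => x * cot x) (Ioo 0 π) := by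
  have hsin : ∀ x ∈ Ioo 0 π, 0 < sin x := fun x hx => sin_pos_of_pos_of_lt_pi hx.1 hx.2
  have hderiv : ∀ x ∈ Ioo 0 π,
      HasDerivAt (fun x => x * cot x) (1 * cot x + x * (-1 / sin x ^ 2)) x :=
    fun x hx => (hasDerivAt_id' x).mul (hasDerivAt_cot (hsin x hx).ne')
  refine strictAntiOn_of_hasDerivWithinAt_neg (convex_Ioo 0 π)
    (fun x hx => (hderiv x hx).continuousAt.continuousWithinAt)
    (fun x hx => (hderiv x (interior_subset hx)).hasDerivWithinAt) fun x hx => ?_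
  rw [interior_Ioo] at hx
  have hform : 1 * cot x + x * (-1 / sin x ^ 2) = (sin x * cos x - x) / sin x ^ 2 := by
    rw [cot_eq_cos_div_sin]
    field_simp [(hsin x hx).ne']
    ring
  rw [hform]
  exact div_neg_of_neg_of_pos (sub_neg.2 (sin_mul_cos_lt hx.1)) (pow_pos (hsin x hx) 2)

theorem tendsto_mul_cot_nhdsNE_zero : Tendsto (fun x => x * cot x) (𝓝[≠] 0) (𝓝 1) := by
  have h : Tendsto (fun x => cos x / sinc x) (𝓝 0) (𝓝 (cos 0 / sinc 0)) :=
    (continuous_cos.continuousAt.div continuous_sinc.continuousAt (by simp)).tendsto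
  rw [cos_zero, sinc_zero, div_one] at h
  refine (h.mono_left nhdsWithin_le_nhds).congr' ?_
  filter_upwards [self_mem_nhdsWithin] with x hx
  rw [sinc_of_ne_zero hx, div_div_eq_mul_div, cot_eq_cos_div_sin, mul_div_assoc', mul_comm]

theorem tendsto_mul_cot_nhdsLT_pi : Tendsto (fun x => x * cot x) (𝓝[<] π) atBot := by
  have hsin : Tendsto sin (𝓝[<] π) (𝓝[>] 0) := by
    refine tendsto_nhdsWithin_iff.2 ⟨?_, ?_⟩
    · simpa using continuous_sin.continuousAt.tendsto.mono_left (nhdsWithin_le_nhds (a := π))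
    · filter_upwards [Ioo_mem_nhdsLT pi_pos] with x hx
      exact sin_pos_of_pos_of_lt_pi hx.1 hx.2
  have hxcos : Tendsto (fun x => x * cos x) (𝓝[<] π) (𝓝 (-π)) := by
    have h : ContinuousAt (fun x => x * cos x) π := by fun_prop
    simpa using h.tendsto.mono_left nhdsWithin_le_nhds
  refine (hxcos.neg_mul_atTop (neg_neg_of_pos pi_pos) (tendsto_inv_nhdsGT_zero.comp hsin)).congr
    fun x => ?_
  simp only [Function.comp_apply, cot_eq_cos_div_sin, div_eq_mul_inv, mul_assoc]

end Real

open Real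

theorem tendsto_const_mul_nhdsGT {c : ℝ} (hc : 0 < c) (a : ℝ) :
    Tendsto (c * ·) (𝓝[>] a) (𝓝[>] (c * a)) :=
  tendsto_nhdsWithin_iff.2 ⟨(continuous_const_mul c).continuousAt.tendsto.mono_left
    nhdsWithin_le_nhds, eventually_nhdsWithin_of_forall fun _ hx => mul_lt_mul_of_pos_left hx hc⟩

theorem tendsto_const_mul_nhdsLT {c : ℝ} (hc : 0 < c) (a : ℝ) :
    Tendsto (c * ·) (𝓝[<] a) (𝓝[<] (c * a)) :=
  tendsto_nhdsWithin_iff.2 ⟨(continuous_const_mul c).continuousAt.tendsto.mono_left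
    nhdsWithin_le_nhds, eventually_nhdsWithin_of_forall fun _ hx => mul_lt_mul_of_pos_left hx hc⟩

noncomputable def phi (c : ℝ) (v : ℝ) : ℝ := 1/4 + v * cot (c * v) - v ^ 2

section Phi

variable {c : ℝ} (hc : 0 < c)
include hc

theorem phi_eq (v : ℝ) : phi c v = 1/4 + (c * v) * cot (c * v) / c - v ^ 2 := by
  rw [phi, mul_assoc, mul_div_cancel_left₀ _ hc.ne']

theorem mapsTo_const_mul_Ioo_zero_pi : MapsTo (c * ·) (Ioo 0 (π / c)) (Ioo 0 π) :=
  fun _ hx => ⟨mul_pos hc hx.1, (lt_div_iff₀' hc).1 hx.2⟩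

theorem strictAntiOn_phi : StrictAntiOn (phi c) (Ioo 0 (π / c)) := by
  intro v hv w hw hvw
  have hcot := strictAntiOn_mul_cot (mapsTo_const_mul_Ioo_zero_pi hc hv)
    (mapsTo_const_mul_Ioo_zero_pi hc hw) (mul_lt_mul_of_pos_left hvw hc)
  have hsq : v ^ 2 < w ^ 2 := pow_lt_pow_left₀ hvw hv.1.le two_ne_zero
  have := div_lt_div_of_pos_right hcot hc
  rw [phi_eq hc, phi_eq hc]
  linarith

theorem continuousOn_phi : ContinuousOn (phi c) (Ioo 0 (π / c)) := by
  intro v hv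
  have hsin : sin (c * v) ≠ 0 := by
    obtain ⟨h0, hπ⟩ := mapsTo_const_mul_Ioo_zero_pi hc hv
    exact (sin_pos_of_pos_of_lt_pi h0 hπ).ne'
  have hcot : ContinuousAt (fun v => cot (c * v)) v :=
    (hasDerivAt_cot hsin).continuousAt.comp (continuous_const_mul c).continuousAt
  exact ((continuousAt_const.add (continuousAt_id.mul hcot)).sub
    (continuousAt_id.pow 2)).continuousWithinAt

theorem tendsto_phi_nhdsGT_zero : Tendsto (phi c) (𝓝[>] 0) (𝓝 (1/4 + 1/c)) := by
  have hmap := tendsto_const_mul_nhdsGT hc 0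
  rw [mul_zero] at hmap
  have hcot := tendsto_mul_cot_nhdsNE_zero.comp (hmap.mono_right (nhdsGT_le_nhdsNE 0))
  have hsq : Tendsto (fun v : ℝ => v ^ 2) (𝓝[>] 0) (𝓝 0) := by
    simpa using ((continuous_pow 2).tendsto (0 : ℝ)).mono_left nhdsWithin_le_nhds
  have h := ((tendsto_const_nhds (x := (1/4 : ℝ))).add (hcot.div_const c)).sub hsq
  simpa using h.congr fun v => (phi_eq hc v).symm

theorem tendsto_phi_nhdsLT : Tendsto (phi c) (𝓝[<] (π / c)) atBot := by
  have hmap := tendsto_const_mul_nhdsLT hc (π / c)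
  rw [mul_div_cancel₀ _ hc.ne'] at hmap
  have hcot := (tendsto_mul_cot_nhdsLT_pi.comp hmap).atBot_div_const hc
  have hrest : Tendsto (fun v : ℝ => 1/4 - v ^ 2) (𝓝[<] (π / c)) (𝓝 (1/4 - (π / c) ^ 2)) :=
    ((continuous_const.sub (continuous_pow 2)).tendsto _).mono_left nhdsWithin_le_nhds
  refine (hcot.atBot_add hrest).congr fun v => ?_
  rw [phi_eq hc]
  simp only [Function.comp_apply]
  ring

end Phi

theorem phi_strictly_decreasing (c₁ : ℝ) (hc₁ : 0 < c₁) :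
    StrictAntiOn (fun v : ℝ => 1/4 + v * Real.cot (c₁ * v) - v ^ 2) (Ioo 0 (Real.pi / c₁)) ∧
    Tendsto (fun v : ℝ => 1/4 + v * Real.cot (c₁ * v) - v ^ 2) (nhdsWithin 0 (Ioi 0))
      (nhds (1/4 + 1/c₁)) ∧
    Tendsto (fun v : ℝ => 1/4 + v * Real.cot (c₁ * v) - v ^ 2)
      (nhdsWithin (Real.pi / c₁) (Iio (Real.pi / c₁))) atBot ∧
    (∀ u : ℝ, u ^ 2 < 1/4 + 1/c₁ →
      ∃! v : ℝ, v ∈ Ioo 0 (Real.pi / c₁) ∧ u ^ 2 = 1/4 + v * Real.cot (c₁ * v) - v ^ 2) ∧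
    (∀ u : ℝ, 1/4 + 1/c₁ ≤ u ^ 2 →
      ¬ ∃ v : ℝ, v ∈ Ioo 0 (Real.pi / c₁) ∧ u ^ 2 = 1/4 + v * Real.cot (c₁ * v) - v ^ 2) := by
  have hanti := strictAntiOn_phi hc₁
  have himage : phi c₁ '' Ioo 0 (π / c₁) = Iio (1/4 + 1/c₁) :=
    hanti.image_Ioo_eq_Iio_of_tendsto (continuousOn_phi hc₁) (by positivity)
      (tendsto_phi_nhdsGT_zero hc₁) (tendsto_phi_nhdsLT hc₁)
  refine ⟨hanti, tendsto_phi_nhdsGT_zero hc₁, tendsto_phi_nhdsLT hc₁, fun u hu => ?_, fun u hu => ?_⟩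
  · obtain ⟨v, hv, hvu⟩ : u ^ 2 ∈ phi c₁ '' Ioo 0 (π / c₁) := himage ▸ hu
    exact ⟨v, ⟨hv, hvu.symm⟩, fun w hw => hanti.injOn hw.1 hv (hw.2.symm.trans hvu.symm)⟩
  · rintro ⟨v, hv, hvu⟩
    have hlt : u ^ 2 ∈ Iio (1/4 + 1/c₁) := himage ▸ ⟨v, hv, hvu.symm⟩
    exact not_lt.2 hu hlt
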